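/- arXiv:1208.5641 — 2 statements merged into one kernel-verified Lean document; each statement's English description precedes it below -/
import Mathlib

section
/- For all real Δ > 0 and λ ∈ (0,1), it holds that exp(-Δ²/2)·(1-λ) < 1, and moreover 1/(1 − exp(-Δ²/2)·(1-λ)) ≤ (Δ² + 2)/(Δ² + 2λ). -/
/-!
With `x = Δ² / 2` and `e = exp (-x)`, the bound `x + 1 ≤ exp x` gives `(x + 1) e ≤ 1`. Clearing
denominators, `1 / (1 - e (1 - λ)) ≤ (x + 1) / (x + λ)` is equivalent to `(x + 1) e (1 - λ) ≤ 1 - λ`,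
which is that bound multiplied by `1 - λ ≥ 0`.
-/

open Real

lemma add_one_mul_exp_neg_le_one (x : ℝ) : (x + 1) * exp (-x) ≤ 1 := by
  rw [exp_neg, ← div_eq_mul_inv, div_le_one (exp_pos x)]
  exact add_one_le_exp x

section

variable {e x lam : ℝ}

lemma mul_one_sub_lt_one (hx : 0 ≤ x) (hl0 : 0 < lam) (hl1 : lam ≤ 1) (he : (x + 1) * e ≤ 1) :
    e * (1 - lam) < 1 := by
  nlinarith

lemma one_div_one_sub_mul_one_sub_le (hx : 0 ≤ x) (hl0 : 0 < lam) (hl1 : lam ≤ 1)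
    (he : (x + 1) * e ≤ 1) :
    1 / (1 - e * (1 - lam)) ≤ (x + 1) / (x + lam) := by
  have hden : 0 < 1 - e * (1 - lam) := sub_pos.mpr (mul_one_sub_lt_one hx hl0 hl1 he)
  rw [div_le_div_iff₀ hden (by positivity)]
  nlinarith [mul_le_mul_of_nonneg_right he (sub_nonneg.mpr hl1)]

end

theorem stmt_3_general (Δ lam : ℝ) (hl0 : 0 < lam) (hl1 : lam < 1) :
    Real.exp (-Δ ^ 2 / 2) * (1 - lam) < 1 ∧
      1 / (1 - Real.exp (-Δ ^ 2 / 2) * (1 - lam)) ≤ (Δ ^ 2 + 2) / (Δ ^ 2 + 2 * lam) := by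
  have hx : 0 ≤ Δ ^ 2 / 2 := by positivity
  have he : (Δ ^ 2 / 2 + 1) * exp (-Δ ^ 2 / 2) ≤ 1 := by
    simpa only [neg_div] using add_one_mul_exp_neg_le_one (Δ ^ 2 / 2)
  refine ⟨mul_one_sub_lt_one hx hl0 hl1.le he, ?_⟩
  have hscale : (Δ ^ 2 + 2) / (Δ ^ 2 + 2 * lam) = (Δ ^ 2 / 2 + 1) / (Δ ^ 2 / 2 + lam) := by
    rw [div_eq_div_iff (by positivity) (by positivity)]
    ring
  rw [hscale]
  exact one_div_one_sub_mul_one_sub_le hx hl0 hl1.le he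

theorem stmt_3 (Δ lam : ℝ) (hΔ : 0 < Δ) (hl0 : 0 < lam) (hl1 : lam < 1) :
    Real.exp (-Δ ^ 2 / 2) * (1 - lam) < 1 ∧
      1 / (1 - Real.exp (-Δ ^ 2 / 2) * (1 - lam)) ≤ (Δ ^ 2 + 2) / (Δ ^ 2 + 2 * lam) :=
  stmt_3_general Δ lam hl0 hl1
end

section
/- Let r = exp(−Δ²/2)·(1−λ) with Δ > 0 and λ ∈ (0,1). Then 0 < r < 1 and ∑_{t=0}^∞ r^t = 1/(1 − exp(−Δ²/2)(1−λ)) ≤ (Δ² + 2)/(Δ² + 2λ). -/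
theorem stmt_19 (Δ lam : ℝ) (hΔ : 0 < Δ) (hl0 : 0 < lam) (hl1 : lam < 1)
    (r : ℝ) (hr : r = Real.exp (-Δ ^ 2 / 2) * (1 - lam)) :
    (0 < r ∧ r < 1) ∧
      HasSum (fun t : ℕ => r ^ t) (1 / (1 - Real.exp (-Δ ^ 2 / 2) * (1 - lam))) ∧
      1 / (1 - Real.exp (-Δ ^ 2 / 2) * (1 - lam)) ≤ (Δ ^ 2 + 2) / (Δ ^ 2 + 2 * lam) := by
  have he : Real.exp (-Δ ^ 2 / 2) ≤ 1 := by
    apply Real.exp_le_one_iff.mpr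
    nlinarith [sq_nonneg Δ]
  have he0 : 0 < Real.exp (-Δ ^ 2 / 2) := Real.exp_pos _
  have hr0 : 0 < r := by rw [hr]; exact mul_pos he0 (by linarith)
  have hr1 : r < 1 := by
    rw [hr]
    calc Real.exp (-Δ ^ 2 / 2) * (1 - lam) ≤ 1 * (1 - lam) := by
          apply mul_le_mul_of_nonneg_right he; linarith
      _ < 1 := by linarith
  refine ⟨⟨hr0, hr1⟩, ?_, ?_⟩
  · have := hasSum_geometric_of_lt_one (le_of_lt hr0) hr1
    rw [hr] at this
    rw [hr, one_div]; exact this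
  · -- key: exp(-Δ²/2) ≤ 2/(Δ²+2)
    have hkey : Real.exp (-Δ ^ 2 / 2) * (Δ ^ 2 + 2) ≤ 2 := by
      have h1 : (1 : ℝ) + Δ ^ 2 / 2 ≤ Real.exp (Δ ^ 2 / 2) := by
        have := Real.add_one_le_exp (Δ ^ 2 / 2); linarith
      have h2 : Real.exp (-Δ ^ 2 / 2) = (Real.exp (Δ ^ 2 / 2))⁻¹ := by
        rw [← Real.exp_neg]; ring_nf
      rw [h2]
      have hep : 0 < Real.exp (Δ ^ 2 / 2) := Real.exp_pos _
      rw [inv_mul_le_iff₀ hep]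
      nlinarith
    have hd : 0 < Δ ^ 2 + 2 := by positivity
    have hd2 : 0 < Δ ^ 2 + 2 * lam := by positivity
    have hA : Δ ^ 2 + 2 * lam ≤ (1 - Real.exp (-Δ ^ 2 / 2) * (1 - lam)) * (Δ ^ 2 + 2) := by
      nlinarith
    have hpos : 0 < 1 - Real.exp (-Δ ^ 2 / 2) * (1 - lam) := by
      rw [hr] at hr1; linarith
    rw [div_le_div_iff₀ hpos hd2]
    nlinarith
end
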